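/- arXiv:1811.11574 — 6 statements merged into one kernel-verified Lean document; each statement's English description precedes it below -/
import Mathlib

section
/- Let n ≥ 2 be an integer, H ∈ ℝ, T > 0, and let sn : (0,T) → ℝ be twice differentiable with sn > 0 and sn'' = −H·sn on (0,T); set μ(r) := (n−1)·sn'(r)/sn(r). If λ : (0,T) → ℝ is differentiable and g : (0,T) → ℝ is a function such that λ'(r) ≤ −λ(r)²/(n−1) − (n−1)·H + g(r) for all r ∈ (0,T), then d/dr [ sn(r)² · (λ(r) − μ(r)) ] ≤ sn(r)² · g(r) for all r ∈ (0,T). -/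
open Set

/-! With `k = n - 1`, the derivative of `sn² (λ - k sn'/sn) = sn² λ - k sn sn'` is
`2 sn sn' λ + sn² λ' - k sn'² + k H sn²`. Inserting the Riccati inequality for `λ'` leaves
`sn² g - (sn λ - k sn')² / k`, and the square has the right sign because `k > 0`. -/

theorem hasDerivAt_sq_mul_sub_mul_div {s σ l : ℝ → ℝ} {σ' l' r : ℝ} (k : ℝ)
    (hs : HasDerivAt s (σ r) r) (hσ : HasDerivAt σ σ' r) (hl : HasDerivAt l l' r)
    (hr : s r ≠ 0) :
    HasDerivAt (fun x => s x ^ 2 * (l x - k * σ x / s x))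
      (2 * s r * σ r * l r + s r ^ 2 * l' - k * (σ r ^ 2 + s r * σ')) r := by
  refine ((hs.fun_pow 2).fun_mul (hl.fun_sub ((hσ.const_mul k).fun_div hs hr))).congr_deriv ?_
  field_simp
  ring

theorem le_sq_mul_of_riccati_le {k s σ l l' H g : ℝ} (hk : 0 < k)
    (hl' : l' ≤ -l ^ 2 / k - k * H + g) :
    2 * s * σ * l + s ^ 2 * l' - k * (σ ^ 2 + s * (-H * s)) ≤ s ^ 2 * g := by
  have gap : s ^ 2 * g - (2 * s * σ * l + s ^ 2 * l' - k * (σ ^ 2 + s * (-H * s)))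
      = (s * l - k * σ) ^ 2 / k + s ^ 2 * (-l ^ 2 / k - k * H + g - l') := by
    field_simp
    ring
  have : 0 ≤ (s * l - k * σ) ^ 2 / k + s ^ 2 * (-l ^ 2 / k - k * H + g - l') := by
    have := sub_nonneg.mpr hl'
    positivity
  linarith

theorem stmt_1_general (n : ℕ) (hn : 2 ≤ n) (H T : ℝ)
    (sn sn' sn'' lam lam' g : ℝ → ℝ)
    (hsn : ∀ r ∈ Ioo 0 T, HasDerivAt sn (sn' r) r)
    (hsn' : ∀ r ∈ Ioo 0 T, HasDerivAt sn' (sn'' r) r)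
    (hpos : ∀ r ∈ Ioo 0 T, 0 < sn r)
    (hode : ∀ r ∈ Ioo 0 T, sn'' r = -H * sn r)
    (hlam : ∀ r ∈ Ioo 0 T, HasDerivAt lam (lam' r) r)
    (hineq : ∀ r ∈ Ioo 0 T,
      lam' r ≤ -(lam r) ^ 2 / ((n : ℝ) - 1) - ((n : ℝ) - 1) * H + g r) :
    ∀ r ∈ Ioo 0 T,
      deriv (fun s => sn s ^ 2 * (lam s - ((n : ℝ) - 1) * sn' s / sn s)) r ≤
        sn r ^ 2 * g r := by
  intro r hr
  have hk : (0 : ℝ) < n - 1 := by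
    have : (2 : ℝ) ≤ n := by exact_mod_cast hn
    linarith
  rw [(hasDerivAt_sq_mul_sub_mul_div _ (hsn r hr) (hsn' r hr) (hlam r hr)
    (hpos r hr).ne').deriv, hode r hr]
  exact le_sq_mul_of_riccati_le hk (hineq r hr)

/-- If λ satisfies the Riccati-type inequality λ' ≤ −λ²/(n−1) − (n−1)H + g, then
d/dr [ sn(r)²·(λ(r) − μ(r)) ] ≤ sn(r)²·g(r), where μ = (n−1)·sn'/sn. -/
theorem stmt_1 (n : ℕ) (hn : 2 ≤ n) (H T : ℝ) (hT : 0 < T)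
    (sn sn' sn'' lam lam' g : ℝ → ℝ)
    (hsn : ∀ r ∈ Ioo 0 T, HasDerivAt sn (sn' r) r)
    (hsn' : ∀ r ∈ Ioo 0 T, HasDerivAt sn' (sn'' r) r)
    (hpos : ∀ r ∈ Ioo 0 T, 0 < sn r)
    (hode : ∀ r ∈ Ioo 0 T, sn'' r = -H * sn r)
    (hlam : ∀ r ∈ Ioo 0 T, HasDerivAt lam (lam' r) r)
    (hineq : ∀ r ∈ Ioo 0 T,
      lam' r ≤ -(lam r) ^ 2 / ((n : ℝ) - 1) - ((n : ℝ) - 1) * H + g r) :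
    ∀ r ∈ Ioo 0 T,
      deriv (fun s => sn s ^ 2 * (lam s - ((n : ℝ) - 1) * sn' s / sn s)) r ≤
        sn r ^ 2 * g r :=
  stmt_1_general n hn H T sn sn' sn'' lam lam' g hsn hsn' hpos hode hlam hineq
end

section
/- Let n ≥ 2 be an integer, δ > 0, K ≥ 0, H ∈ ℝ, T > 0. Let sn : [0,T] → ℝ be C² with sn'' = −H·sn, sn(0) = 0, sn'(0) = 1, sn(r) > 0 for r ∈ (0,T], and (sn²)''(r) ≥ 0 for all r ∈ [0,T]. Let f : [0,T] → ℝ be C² with |f(r)| ≤ K for all r, and let λ : (0,T] → ℝ be differentiable with lim_{r→0⁺} sn(r)²·λ(r) = 0 and λ'(r) ≤ −λ(r)²/((n−1)·δ) − (n−1)·δ·H + f''(r) for all r ∈ (0,T]. Then for every r ∈ (0,T]: λ(r) − f'(r) ≤ δ·(1 + 4K/(δ·(n−1)))·(n−1)·sn'(r)/sn(r). -/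
/-!
With `c = (n - 1) δ` and `ψ = sn · sn' = (sn²)' / 2`, the gap
`G = sn² (λ - f') - (c + 2K - 2f) ψ` has derivative
`G' = 2 ψ λ + sn² (λ' - f'') - (c + 2K - 2f) ψ'`. Using `sn'' = -H sn` and the Riccati
inequality this is at most `-(sn λ - c sn')² / c - 2 (K - f) ψ' ≤ 0`, since `ψ' ≥ 0` and `f ≤ K`.
As `G → 0` at `0⁺`, `G ≤ 0` on `(0, T]`; finally `ψ ≥ 0` (it vanishes at `0` and increases)
and `-f ≤ K` give `sn² (λ - f') ≤ (c + 4K) ψ`, which is the claim after dividing by `sn²`.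
-/

open Set Filter Topology

lemma le_of_hasDerivAt_nonpos_of_tendsto_nhdsGT {g g' : ℝ → ℝ} {a b l : ℝ}
    (hg : ∀ x ∈ Ioc a b, HasDerivAt g (g' x) x) (hg' : ∀ x ∈ Ioc a b, g' x ≤ 0)
    (hlim : Tendsto g (𝓝[>] a) (𝓝 l)) : ∀ r ∈ Ioc a b, g r ≤ l := by
  have hanti : AntitoneOn g (Ioc a b) :=
    antitoneOn_of_hasDerivWithinAt_nonpos (convex_Ioc a b)
      (fun x hx => (hg x hx).continuousAt.continuousWithinAt)
      (fun x hx => (hg x (interior_subset hx)).hasDerivWithinAt)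
      (fun x hx => hg' x (interior_subset hx))
  intro r hr
  refine ge_of_tendsto hlim ?_
  filter_upwards [Ioo_mem_nhdsGT hr.1] with s hs
  exact hanti ⟨hs.1, hs.2.le.trans hr.2⟩ hr hs.2.le

lemma nonneg_of_hasDerivAt_nonneg {g g' : ℝ → ℝ} {a b : ℝ} (ha : 0 ≤ g a)
    (hg : ∀ x ∈ Icc a b, HasDerivAt g (g' x) x) (hg' : ∀ x ∈ Icc a b, 0 ≤ g' x) :
    ∀ r ∈ Icc a b, 0 ≤ g r := by
  have hmono : MonotoneOn g (Icc a b) :=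
    monotoneOn_of_hasDerivWithinAt_nonneg (convex_Icc a b)
      (fun x hx => (hg x hx).continuousAt.continuousWithinAt)
      (fun x hx => (hg x (interior_subset hx)).hasDerivWithinAt)
      (fun x hx => hg' x (interior_subset hx))
  intro r hr
  exact ha.trans (hmono ⟨le_rfl, hr.1.trans hr.2⟩ hr hr.1)

lemma riccati_gap_deriv_nonpos {c H K s s' s'' l l' f f'' : ℝ} (hc : 0 < c)
    (hode : s'' = -H * s) (hric : l' ≤ -l ^ 2 / c - c * H + f'') (hf : f ≤ K)
    (hconv : 0 ≤ s' ^ 2 + s * s'') :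
    2 * (s * s') * l + s ^ 2 * (l' - f'') - (c + 2 * K - 2 * f) * (s' ^ 2 + s * s'') ≤ 0 := by
  have hsquare :
      2 * (s * s') * l - s ^ 2 * (l ^ 2 / c) - c * s' ^ 2 = -((s * l - c * s') ^ 2 / c) := by
    field_simp
    ring
  have hric' : s ^ 2 * (l' - f'') ≤ s ^ 2 * (-l ^ 2 / c - c * H) :=
    mul_le_mul_of_nonneg_left (by linarith) (sq_nonneg s)
  have hsquare_nonneg : 0 ≤ (s * l - c * s') ^ 2 / c := div_nonneg (sq_nonneg _) hc.le
  have hslack : 0 ≤ (K - f) * (s' ^ 2 + s * s'') := mul_nonneg (by linarith) hconv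
  subst hode
  linear_combination hric' + 2 * hslack + hsquare_nonneg + hsquare

section RiccatiGap

variable {c K H T : ℝ} {sn sn' sn'' f f' f'' lam lam' : ℝ → ℝ}

def riccatiGap (c K : ℝ) (sn sn' f f' lam : ℝ → ℝ) (r : ℝ) : ℝ :=
  sn r ^ 2 * (lam r - f' r) - (c + 2 * K - 2 * f r) * (sn r * sn' r)

lemma hasDerivAt_riccatiGap {x : ℝ} (hsn : HasDerivAt sn (sn' x) x)
    (hsn' : HasDerivAt sn' (sn'' x) x) (hf : HasDerivAt f (f' x) x)
    (hf' : HasDerivAt f' (f'' x) x) (hlam : HasDerivAt lam (lam' x) x) :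
    HasDerivAt (riccatiGap c K sn sn' f f' lam)
      (2 * (sn x * sn' x) * lam x + sn x ^ 2 * (lam' x - f'' x)
        - (c + 2 * K - 2 * f x) * (sn' x ^ 2 + sn x * sn'' x)) x := by
  have h := ((hsn.fun_pow 2).fun_mul (hlam.fun_sub hf')).fun_sub
    (((hf.const_mul 2).const_sub (c + 2 * K)).fun_mul (hsn.fun_mul hsn'))
  exact h.congr_deriv (by push_cast; ring)

lemma tendsto_riccatiGap_nhdsGT_zero (hsn : ContinuousAt sn 0) (hsn0 : sn 0 = 0)
    (hsn' : ContinuousAt sn' 0) (hf : ContinuousAt f 0) (hf' : ContinuousAt f' 0)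
    (hlim : Tendsto (fun r => sn r ^ 2 * lam r) (𝓝[>] 0) (𝓝 0)) :
    Tendsto (riccatiGap c K sn sn' f f' lam) (𝓝[>] 0) (𝓝 0) := by
  have hcont : ContinuousAt
      (fun r => sn r ^ 2 * f' r + (c + 2 * K - 2 * f r) * (sn r * sn' r)) 0 :=
    ((hsn.pow 2).mul hf').add (((continuousAt_const.sub (hf.const_mul 2))).mul (hsn.mul hsn'))
  have hrest := hcont.tendsto.mono_left (nhdsWithin_le_nhds (s := Ioi 0))
  simp only [hsn0] at hrest
  convert hlim.sub hrest using 2 with r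
  · simp only [riccatiGap]
    ring
  · simp

lemma riccatiGap_nonpos (hc : 0 < c)
    (hsn : ∀ r ∈ Icc 0 T, HasDerivAt sn (sn' r) r)
    (hsn' : ∀ r ∈ Icc 0 T, HasDerivAt sn' (sn'' r) r)
    (hode : ∀ r ∈ Icc 0 T, sn'' r = -H * sn r) (hsn0 : sn 0 = 0)
    (hconv : ∀ r ∈ Icc 0 T, 0 ≤ sn' r ^ 2 + sn r * sn'' r)
    (hf : ∀ r ∈ Icc 0 T, HasDerivAt f (f' r) r)
    (hf' : ∀ r ∈ Icc 0 T, HasDerivAt f' (f'' r) r)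
    (hfK : ∀ r ∈ Icc 0 T, f r ≤ K)
    (hlam : ∀ r ∈ Ioc 0 T, HasDerivAt lam (lam' r) r)
    (hlim : Tendsto (fun r => sn r ^ 2 * lam r) (𝓝[>] 0) (𝓝 0))
    (hric : ∀ r ∈ Ioc 0 T, lam' r ≤ -lam r ^ 2 / c - c * H + f'' r) :
    ∀ r ∈ Ioc 0 T, riccatiGap c K sn sn' f f' lam r ≤ 0 := by
  intro r hr
  have h0 : (0 : ℝ) ∈ Icc 0 T := ⟨le_rfl, hr.1.le.trans hr.2⟩
  refine le_of_hasDerivAt_nonpos_of_tendsto_nhdsGT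
    (fun x hx => hasDerivAt_riccatiGap (hsn x (Ioc_subset_Icc_self hx))
      (hsn' x (Ioc_subset_Icc_self hx)) (hf x (Ioc_subset_Icc_self hx))
      (hf' x (Ioc_subset_Icc_self hx)) (hlam x hx))
    (fun x hx => riccati_gap_deriv_nonpos hc (hode x (Ioc_subset_Icc_self hx)) (hric x hx)
      (hfK x (Ioc_subset_Icc_self hx)) (hconv x (Ioc_subset_Icc_self hx)))
    (tendsto_riccatiGap_nhdsGT_zero (hsn 0 h0).continuousAt hsn0 (hsn' 0 h0).continuousAt
      (hf 0 h0).continuousAt (hf' 0 h0).continuousAt hlim) r hr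

end RiccatiGap

theorem stmt_2_general (n : ℕ) (hn : 2 ≤ n) (δ K H T : ℝ) (hδ : 0 < δ)
    (sn sn' sn'' f f' f'' lam lam' : ℝ → ℝ)
    (hsn : ∀ r ∈ Icc 0 T, HasDerivAt sn (sn' r) r)
    (hsn' : ∀ r ∈ Icc 0 T, HasDerivAt sn' (sn'' r) r)
    (hode : ∀ r ∈ Icc 0 T, sn'' r = -H * sn r)
    (hsn0 : sn 0 = 0)
    (hpos : ∀ r ∈ Ioc 0 T, 0 < sn r)
    (hconv : ∀ r ∈ Icc 0 T, 0 ≤ 2 * (sn' r ^ 2 + sn r * sn'' r))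
    (hf : ∀ r ∈ Icc 0 T, HasDerivAt f (f' r) r)
    (hf' : ∀ r ∈ Icc 0 T, HasDerivAt f' (f'' r) r)
    (hfK : ∀ r ∈ Icc 0 T, |f r| ≤ K)
    (hlam : ∀ r ∈ Ioc 0 T, HasDerivAt lam (lam' r) r)
    (hlim : Filter.Tendsto (fun r => sn r ^ 2 * lam r) (nhdsWithin 0 (Ioi 0)) (nhds 0))
    (hric : ∀ r ∈ Ioc 0 T,
      lam' r ≤ -(lam r) ^ 2 / (((n : ℝ) - 1) * δ) - ((n : ℝ) - 1) * δ * H + f'' r) :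
    ∀ r ∈ Ioc 0 T,
      lam r - f' r ≤ δ * (1 + 4 * K / (δ * ((n : ℝ) - 1))) * ((n : ℝ) - 1) * sn' r / sn r := by
  intro r hr
  have hn1 : (0 : ℝ) < (n : ℝ) - 1 := by
    have : (2 : ℝ) ≤ n := by exact_mod_cast hn
    linarith
  have hconv' : ∀ x ∈ Icc 0 T, 0 ≤ sn' x ^ 2 + sn x * sn'' x := fun x hx => by
    linarith [hconv x hx]
  have hgap := riccatiGap_nonpos (K := K) (mul_pos hn1 hδ) hsn hsn' hode hsn0 hconv' hf hf'
    (fun x hx => (abs_le.mp (hfK x hx)).2) hlam hlim hric r hr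
  have hψ : 0 ≤ sn r * sn' r :=
    nonneg_of_hasDerivAt_nonneg (by simp [hsn0]) (fun x hx => (hsn x hx).mul (hsn' x hx))
      (fun x hx => by linarith [hconv x hx]) r (Ioc_subset_Icc_self hr)
  have hfr : -K ≤ f r := (abs_le.mp (hfK r (Ioc_subset_Icc_self hr))).1
  have hsnr := hpos r hr
  rw [show δ * (1 + 4 * K / (δ * ((n : ℝ) - 1))) * ((n : ℝ) - 1) * sn' r
      = ((n - 1) * δ + 4 * K) * sn' r by field_simp, le_div_iff₀ hsnr]
  unfold riccatiGap at hgap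
  nlinarith [mul_nonneg hψ (by linarith : 0 ≤ f r + K)]

/-- ODE form of the extended mean curvature comparison theorem. -/
theorem stmt_2 (n : ℕ) (hn : 2 ≤ n) (δ K H T : ℝ) (hδ : 0 < δ) (hK : 0 ≤ K) (hT : 0 < T)
    (sn sn' sn'' f f' f'' lam lam' : ℝ → ℝ)
    (hsn : ∀ r ∈ Icc 0 T, HasDerivAt sn (sn' r) r)
    (hsn' : ∀ r ∈ Icc 0 T, HasDerivAt sn' (sn'' r) r)
    (hsncont : ContinuousOn sn'' (Icc 0 T))
    (hode : ∀ r ∈ Icc 0 T, sn'' r = -H * sn r)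
    (hsn0 : sn 0 = 0) (hsn'0 : sn' 0 = 1)
    (hpos : ∀ r ∈ Ioc 0 T, 0 < sn r)
    (hconv : ∀ r ∈ Icc 0 T, 0 ≤ 2 * (sn' r ^ 2 + sn r * sn'' r))
    (hf : ∀ r ∈ Icc 0 T, HasDerivAt f (f' r) r)
    (hf' : ∀ r ∈ Icc 0 T, HasDerivAt f' (f'' r) r)
    (hfcont : ContinuousOn f'' (Icc 0 T))
    (hfK : ∀ r ∈ Icc 0 T, |f r| ≤ K)
    (hlam : ∀ r ∈ Ioc 0 T, HasDerivAt lam (lam' r) r)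
    (hlim : Filter.Tendsto (fun r => sn r ^ 2 * lam r) (nhdsWithin 0 (Ioi 0)) (nhds 0))
    (hric : ∀ r ∈ Ioc 0 T,
      lam' r ≤ -(lam r) ^ 2 / (((n : ℝ) - 1) * δ) - ((n : ℝ) - 1) * δ * H + f'' r) :
    ∀ r ∈ Ioc 0 T,
      lam r - f' r ≤ δ * (1 + 4 * K / (δ * ((n : ℝ) - 1))) * ((n : ℝ) - 1) * sn' r / sn r :=
  stmt_2_general n hn δ K H T hδ sn sn' sn'' f f' f'' lam lam' hsn hsn' hode hsn0 hpos hconv hf hf'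
    hfK hlam hlim hric
end

section
/- Let b > 0, R > 0, δ₁ > 0, and C > 2δ₁; set D := 2 − C/δ₁ (so D < 0). Define G : (0,R] → ℝ by G(r) = (b/(2C)) · ( r² + (2/D − 1)·R² − (2/D)·R^{2−D}·r^D ). Then: (i) δ₁·G''(r) + (C − δ₁)·G'(r)/r = b for all r ∈ (0,R); (ii) G(R) = 0; (iii) G'(r) < 0 for all r ∈ (0,R); (iv) G(r) > 0 for all r ∈ (0,R). -/
/-!
With `X = R ^ (2 - D)`, the barrier `K (r² + (2/D - 1) R² - (2/D) X r^D)` has derivative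
`2K (r - X r^(D-1)) = 2K r^(D-1) (r^(2-D) - X)`, which is negative on `(0, R)` because `2 - D > 0`.
Since the barrier vanishes at `R`, it is positive on `(0, R)`. The exponent `D` is the nonzero root
of the indicial equation `δ₁ D (D - 1) + (C - δ₁) D = 0`, so the `r^D` term is annihilated by the
operator `δ₁ ∂² + (C - δ₁) r⁻¹ ∂`, which maps `r²` to `2C`.
-/

open Set

noncomputable section

def radialBarrier (K R D r : ℝ) : ℝ :=
  K * (r ^ 2 + (2 / D - 1) * R ^ 2 - 2 / D * R ^ (2 - D) * r ^ D)

namespace radialBarrier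

variable {K R D r : ℝ}

theorem hasDerivAt (hD : D ≠ 0) (hr : 0 < r) :
    HasDerivAt (radialBarrier K R D) (2 * K * (r - R ^ (2 - D) * r ^ (D - 1))) r := by
  have hsq : HasDerivAt (fun x : ℝ => x ^ 2) (2 * r) r := by
    simpa using hasDerivAt_pow 2 r
  have hpow : HasDerivAt (fun x : ℝ => x ^ D) (D * r ^ (D - 1)) r :=
    Real.hasDerivAt_rpow_const (Or.inl hr.ne')
  refine (((hsq.add_const ((2 / D - 1) * R ^ 2)).sub
    (hpow.const_mul (2 / D * R ^ (2 - D)))).const_mul K).congr_deriv ?_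
  field_simp

theorem deriv_eq (hD : D ≠ 0) (hr : 0 < r) :
    deriv (radialBarrier K R D) r = 2 * K * (r - R ^ (2 - D) * r ^ (D - 1)) :=
  (hasDerivAt hD hr).deriv

theorem deriv_deriv_eq (hD : D ≠ 0) (hr : 0 < r) :
    deriv (deriv (radialBarrier K R D)) r =
      2 * K * (1 - R ^ (2 - D) * ((D - 1) * r ^ (D - 2))) := by
  have hderiv : deriv (radialBarrier K R D) =ᶠ[nhds r]
      fun x => 2 * K * (x - R ^ (2 - D) * x ^ (D - 1)) := by
    filter_upwards [Ioi_mem_nhds hr] with x hx using deriv_eq hD hx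
  have hpow : HasDerivAt (fun x : ℝ => x ^ (D - 1)) ((D - 1) * r ^ (D - 1 - 1)) r :=
    Real.hasDerivAt_rpow_const (Or.inl hr.ne')
  rw [show D - 1 - 1 = D - 2 by ring] at hpow
  rw [hderiv.deriv_eq]
  exact (((hasDerivAt_id r).sub (hpow.const_mul (R ^ (2 - D)))).const_mul (2 * K)).deriv

theorem apply_self (hR : 0 < R) : radialBarrier K R D R = 0 := by
  have hX : R ^ (2 - D) * R ^ D = R ^ 2 := by
    rw [← Real.rpow_add hR, sub_add_cancel, Real.rpow_two]
  rw [radialBarrier, mul_assoc (2 / D), hX]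
  ring

theorem ode {δ₁ C : ℝ} (hδD : δ₁ * D = 2 * δ₁ - C) (hD : D ≠ 0) (hr : 0 < r) :
    δ₁ * deriv (deriv (radialBarrier K R D)) r + (C - δ₁) * deriv (radialBarrier K R D) r / r =
      2 * K * C := by
  have hpow : r ^ (D - 1) = r ^ (D - 2) * r := by
    rw [← Real.rpow_add_one hr.ne']
    ring_nf
  rw [deriv_deriv_eq hD hr, deriv_eq hD hr, hpow]
  field_simp
  linear_combination -(K * R ^ (2 - D) * r ^ (D - 2)) * hδD

theorem deriv_neg (hK : 0 < K) (hD : D ≠ 0) (hD2 : D < 2) (hr : r ∈ Ioo 0 R) :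
    deriv (radialBarrier K R D) r < 0 := by
  obtain ⟨hr0, hrR⟩ := hr
  have hfactor : r - R ^ (2 - D) * r ^ (D - 1) = r ^ (D - 1) * (r ^ (2 - D) - R ^ (2 - D)) := by
    rw [mul_sub, ← Real.rpow_add hr0, show D - 1 + (2 - D) = 1 by ring, Real.rpow_one]
    ring
  have hlt : r ^ (2 - D) < R ^ (2 - D) := Real.rpow_lt_rpow hr0.le hrR (by linarith)
  rw [deriv_eq hD hr0, hfactor]
  exact mul_neg_of_pos_of_neg (by positivity)
    (mul_neg_of_pos_of_neg (Real.rpow_pos_of_pos hr0 _) (sub_neg.mpr hlt))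

theorem pos (hK : 0 < K) (hD : D ≠ 0) (hD2 : D < 2) (hR : 0 < R) (hr : r ∈ Ioo 0 R) :
    0 < radialBarrier K R D r := by
  obtain ⟨hr0, hrR⟩ := hr
  have hanti : StrictAntiOn (radialBarrier K R D) (Icc r R) := by
    refine strictAntiOn_of_deriv_neg (convex_Icc r R) ?_ ?_
    · exact fun x hx => (hasDerivAt hD (hr0.trans_le hx.1)).continuousAt.continuousWithinAt
    · rw [interior_Icc]
      exact fun x hx => deriv_neg hK hD hD2 ⟨hr0.trans hx.1, hx.2⟩
  simpa [apply_self hR] using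
    hanti (left_mem_Icc.mpr hrR.le) (right_mem_Icc.mpr hrR.le) hrR

end radialBarrier

end

/-- Properties of the explicit flat-case barrier function of the extended
quantitative maximal principle. -/
theorem stmt_8 (b R δ₁ C D : ℝ) (hb : 0 < b) (hR : 0 < R) (hδ : 0 < δ₁)
    (hC : 2 * δ₁ < C) (hD : D = 2 - C / δ₁)
    (G : ℝ → ℝ)
    (hG : ∀ r : ℝ, G r = b / (2 * C) * (r ^ 2 + (2 / D - 1) * R ^ 2 - (2 / D) * R ^ (2 - D) * r ^ D)) :
    (∀ r ∈ Ioo 0 R, δ₁ * deriv (deriv G) r + (C - δ₁) * deriv G r / r = b) ∧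
    G R = 0 ∧
    (∀ r ∈ Ioo 0 R, deriv G r < 0) ∧
    (∀ r ∈ Ioo 0 R, 0 < G r) := by
  have hC0 : 0 < C := by linarith
  have hK : 0 < b / (2 * C) := by positivity
  have hDneg : D < 0 := by
    rw [hD, sub_neg, lt_div_iff₀ hδ]
    linarith
  have hδD : δ₁ * D = 2 * δ₁ - C := by
    rw [hD]
    field_simp
  obtain rfl : G = radialBarrier (b / (2 * C)) R D := funext hG
  refine ⟨fun r hr => ?_, radialBarrier.apply_self hR,
    fun r hr => radialBarrier.deriv_neg hK hDneg.ne (by linarith) hr,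
    fun r hr => radialBarrier.pos hK hDneg.ne (by linarith) hR hr⟩
  rw [radialBarrier.ode hδD hDneg.ne hr.1]
  field_simp
end

section
/- Let a > 0, κ > 0, b > 0, δ₁ > 0, and R > 0. Define G : (0,R] → ℝ by G(r) = (b/δ₁) · ∫_r^R ( ∫_r^t (sinh(a·t)/sinh(a·s))^κ ds ) dt. Then: (i) G'(r) = −(b/δ₁)·sinh(a·r)^{−κ}·∫_r^R sinh(a·t)^κ dt, which is negative for all r ∈ (0,R); (ii) δ₁·G''(r) + δ₁·κ·a·(cosh(a·r)/sinh(a·r))·G'(r) = b for all r ∈ (0,R); (iii) G(R) = 0; (iv) G(r) > 0 for all r ∈ (0,R). -/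
/-!
Write `w s = sinh (a s) ^ κ` and `W r = ∫_r^R w`. The integrand is `w t / w s`, so an
integration by parts turns the double integral into `∫_r^R W s / w s ds`. Hence
`G' = -(b/δ₁) W / w < 0`, and since `W' = -w`, `(W / w)' = -1 - (w' / w) (W / w)`: this is the
equation, as `w' / w = κ a coth (a r)`.
-/

open Set Filter intervalIntegral

variable {I : Set ℝ} {f w : ℝ → ℝ} {a x r R w' κ : ℝ}

theorem ContinuousOn.hasDerivAt_integral_right [I.OrdConnected] (hI : IsOpen I)
    (hf : ContinuousOn f I) (ha : a ∈ I) (hx : x ∈ I) :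
    HasDerivAt (fun t => ∫ s in a..t, f s) (f x) x :=
  integral_hasDerivAt_right (hf.mono (OrdConnected.uIcc_subset ‹_› ha hx)).intervalIntegrable
    (hf.stronglyMeasurableAtFilter hI x hx) (hf.continuousAt (hI.mem_nhds hx))

theorem ContinuousOn.hasDerivAt_integral_left [I.OrdConnected] (hI : IsOpen I)
    (hf : ContinuousOn f I) (ha : a ∈ I) (hx : x ∈ I) :
    HasDerivAt (fun t => ∫ s in t..a, f s) (-f x) x := by
  rw [show (fun t => ∫ s in t..a, f s) = fun t => -∫ s in a..t, f s from
    funext fun t => integral_symm a t]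
  exact (hf.hasDerivAt_integral_right hI ha hx).neg

theorem ContinuousOn.continuousOn_integral_left [I.OrdConnected] (hI : IsOpen I)
    (hf : ContinuousOn f I) (ha : a ∈ I) : ContinuousOn (fun t => ∫ s in t..a, f s) I :=
  fun _ hx => (hf.hasDerivAt_integral_left hI ha hx).continuousAt.continuousWithinAt

theorem integral_integral_div_eq_integral_div [I.OrdConnected] (hI : IsOpen I)
    (hw : ContinuousOn w I) (hw0 : ∀ x ∈ I, w x ≠ 0) (hr : r ∈ I) (hR : R ∈ I) :
    ∫ t in r..R, ∫ s in r..t, w t / w s = ∫ s in r..R, (∫ t in s..R, w t) / w s := by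
  have hinv : ContinuousOn (fun s => (w s)⁻¹) I := hw.inv₀ hw0
  have hsub : uIcc r R ⊆ I := OrdConnected.uIcc_subset ‹_› hr hR
  simp_rw [div_eq_mul_inv, intervalIntegral.integral_const_mul, mul_comm (w _)]
  have hparts := intervalIntegral.integral_mul_deriv_eq_deriv_mul
    (fun x hx => hinv.hasDerivAt_integral_right hI hr (hsub hx))
    (fun x hx => (hw.hasDerivAt_integral_left hI hR (hsub hx)).fun_neg.congr_deriv (neg_neg _))
    (hinv.mono hsub).intervalIntegrable (hw.mono hsub).intervalIntegrable
  simpa [mul_comm] using hparts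

theorem hasDerivAt_integral_integral_div [I.OrdConnected] (hI : IsOpen I)
    (hw : ContinuousOn w I) (hw0 : ∀ x ∈ I, w x ≠ 0) (hr : r ∈ I) (hR : R ∈ I) :
    HasDerivAt (fun r => ∫ s in r..R, (∫ t in s..R, w t) / w s)
      (-((∫ t in r..R, w t) / w r)) r :=
  ((hw.continuousOn_integral_left hI hR).div hw hw0).hasDerivAt_integral_left hI hR hr

theorem hasDerivAt_neg_integral_div [I.OrdConnected] (hI : IsOpen I)
    (hw : ContinuousOn w I) (hw0 : w r ≠ 0) (hw' : HasDerivAt w w' r) (hr : r ∈ I)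
    (hR : R ∈ I) :
    HasDerivAt (fun x => -((∫ t in x..R, w t) / w x))
      (1 - w' / w r * -((∫ t in r..R, w t) / w r)) r := by
  refine ((hw.hasDerivAt_integral_left hI hR hr).fun_div hw' hw0).fun_neg.congr_deriv ?_
  field_simp
  ring

theorem intervalIntegral_pos_of_continuousOn [I.OrdConnected] (hf : ContinuousOn f I)
    (hf0 : ∀ x ∈ I, 0 < f x) (hr : r ∈ I) (hR : R ∈ I) (hrR : r < R) :
    0 < ∫ t in r..R, f t :=
  intervalIntegral_pos_of_pos_on
    (hf.mono (OrdConnected.uIcc_subset ‹_› hr hR)).intervalIntegrable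
    (fun _ hx => hf0 _ (OrdConnected.out ‹_› hr hR (Ioo_subset_Icc_self hx))) hrR

theorem integral_integral_div_pos [I.OrdConnected] (hI : IsOpen I) (hw : ContinuousOn w I)
    (hw0 : ∀ x ∈ I, 0 < w x) (hr : r ∈ I) (hR : R ∈ I) (hrR : r < R) :
    0 < ∫ s in r..R, (∫ t in s..R, w t) / w s := by
  have hsub : uIcc r R ⊆ I := OrdConnected.uIcc_subset ‹_› hr hR
  have hcont := (hw.continuousOn_integral_left hI hR).div hw fun x hx => (hw0 x hx).ne'
  refine intervalIntegral_pos_of_pos_on (hcont.mono hsub).intervalIntegrable (fun s hs => ?_) hrR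
  have hsI : s ∈ I := OrdConnected.out ‹_› hr hR (Ioo_subset_Icc_self hs)
  exact div_pos (intervalIntegral_pos_of_continuousOn hw hw0 hsI hR hs.2) (hw0 s hsI)

theorem hasDerivAt_sinh_mul_rpow (hx : 0 < Real.sinh (a * x)) :
    HasDerivAt (fun t => Real.sinh (a * t) ^ κ)
      (κ * a * (Real.cosh (a * x) / Real.sinh (a * x)) * Real.sinh (a * x) ^ κ) x := by
  refine (((Real.hasDerivAt_sinh (a * x)).comp x ((hasDerivAt_id x).const_mul a)).rpow_const
    (p := κ) (Or.inl hx.ne')).congr_deriv ?_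
  rw [Function.comp_apply, Real.rpow_sub_one hx.ne']
  field_simp

theorem integral_integral_sinh_div_rpow (ha : 0 < a) (hr : 0 < r) (hR : 0 < R) :
    ∫ t in r..R, ∫ s in r..t, (Real.sinh (a * t) / Real.sinh (a * s)) ^ κ
      = ∫ t in r..R, ∫ s in r..t, Real.sinh (a * t) ^ κ / Real.sinh (a * s) ^ κ := by
  have hsinh : ∀ x ∈ Ioi (0 : ℝ), 0 ≤ Real.sinh (a * x) :=
    fun x hx => (Real.sinh_pos_iff.mpr (mul_pos ha hx)).le
  refine integral_congr fun t ht => integral_congr fun s hs => ?_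
  have ht' := ordConnected_Ioi.uIcc_subset hr hR ht
  exact Real.div_rpow (hsinh t ht') (hsinh s (ordConnected_Ioi.uIcc_subset hr ht' hs)) κ

theorem stmt_9_general (a κ b δ₁ R : ℝ) (ha : 0 < a) (hb : 0 < b) (hδ : 0 < δ₁)
    (hR : 0 < R)
    (G : ℝ → ℝ)
    (hG : ∀ r : ℝ, G r = b / δ₁ * ∫ t in r..R, ∫ s in r..t,
      (Real.sinh (a * t) / Real.sinh (a * s)) ^ κ) :
    (∀ r ∈ Ioo 0 R,
      deriv G r = -(b / δ₁) * Real.sinh (a * r) ^ (-κ) * ∫ t in r..R, Real.sinh (a * t) ^ κ) ∧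
    (∀ r ∈ Ioo 0 R, deriv G r < 0) ∧
    (∀ r ∈ Ioo 0 R,
      δ₁ * deriv (deriv G) r +
        δ₁ * κ * a * (Real.cosh (a * r) / Real.sinh (a * r)) * deriv G r = b) ∧
    G R = 0 ∧
    (∀ r ∈ Ioo 0 R, 0 < G r) := by
  set w : ℝ → ℝ := fun t => Real.sinh (a * t) ^ κ
  have hsinh : ∀ x ∈ Ioi (0 : ℝ), 0 < Real.sinh (a * x) :=
    fun x hx => Real.sinh_pos_iff.mpr (mul_pos ha hx)
  have hw0 : ∀ x ∈ Ioi (0 : ℝ), 0 < w x := fun x hx => Real.rpow_pos_of_pos (hsinh x hx) κ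
  have hw_ne : ∀ x ∈ Ioi (0 : ℝ), w x ≠ 0 := fun x hx => (hw0 x hx).ne'
  have hw : ContinuousOn w (Ioi 0) := fun x hx =>
    (hasDerivAt_sinh_mul_rpow (hsinh x hx)).continuousAt.continuousWithinAt
  have hGw : ∀ r ∈ Ioi (0 : ℝ), G r = b / δ₁ * ∫ s in r..R, (∫ t in s..R, w t) / w s :=
    fun r hr => by rw [hG, integral_integral_sinh_div_rpow ha hr hR,
      integral_integral_div_eq_integral_div isOpen_Ioi hw hw_ne hr hR]
  have hG' : ∀ r ∈ Ioi (0 : ℝ), HasDerivAt G (b / δ₁ * -((∫ t in r..R, w t) / w r)) r :=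
    fun r hr => ((hasDerivAt_integral_integral_div isOpen_Ioi hw hw_ne hr hR).const_mul _)
      |>.congr_of_eventuallyEq (eventually_of_mem (isOpen_Ioi.mem_nhds hr) hGw)
  have hG'' : ∀ r ∈ Ioi (0 : ℝ), HasDerivAt (deriv G)
      (b / δ₁ * (1 - κ * a * (Real.cosh (a * r) / Real.sinh (a * r)) *
        -((∫ t in r..R, w t) / w r))) r := by
    intro r hr
    have h := hasDerivAt_neg_integral_div isOpen_Ioi hw (hw_ne r hr)
      (hasDerivAt_sinh_mul_rpow (hsinh r hr)) hr hR
    rw [mul_div_cancel_right₀ _ (hw_ne r hr)] at h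
    exact (h.const_mul _).congr_of_eventuallyEq
      (eventually_of_mem (isOpen_Ioi.mem_nhds hr) fun x hx => (hG' x hx).deriv)
  have htail : ∀ r ∈ Ioo 0 R, 0 < ∫ t in r..R, w t :=
    fun r hr => intervalIntegral_pos_of_continuousOn hw hw0 hr.1 hR hr.2
  refine ⟨fun r hr => ?_, fun r hr => ?_, fun r hr => ?_, by simp [hG], fun r hr => ?_⟩
  · rw [(hG' r hr.1).deriv, Real.rpow_neg (hsinh r hr.1).le]
    ring
  · rw [(hG' r hr.1).deriv]
    exact mul_neg_of_pos_of_neg (div_pos hb hδ)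
      (neg_neg_of_pos (div_pos (htail r hr) (hw0 r hr.1)))
  · rw [(hG'' r hr.1).deriv, (hG' r hr.1).deriv]
    field_simp
    ring
  · rw [hGw r hr.1]
    exact mul_pos (div_pos hb hδ) (integral_integral_div_pos isOpen_Ioi hw hw0 hr.1 hR hr.2)

/-- Properties of the explicit negatively curved barrier function of the extended
quantitative maximal principle. -/
theorem stmt_9 (a κ b δ₁ R : ℝ) (ha : 0 < a) (hκ : 0 < κ) (hb : 0 < b) (hδ : 0 < δ₁)
    (hR : 0 < R)
    (G : ℝ → ℝ)
    (hG : ∀ r : ℝ, G r = b / δ₁ * ∫ t in r..R, ∫ s in r..t,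
      (Real.sinh (a * t) / Real.sinh (a * s)) ^ κ) :
    (∀ r ∈ Ioo 0 R,
      deriv G r = -(b / δ₁) * Real.sinh (a * r) ^ (-κ) * ∫ t in r..R, Real.sinh (a * t) ^ κ) ∧
    (∀ r ∈ Ioo 0 R, deriv G r < 0) ∧
    (∀ r ∈ Ioo 0 R,
      δ₁ * deriv (deriv G) r +
        δ₁ * κ * a * (Real.cosh (a * r) / Real.sinh (a * r)) * deriv G r = b) ∧
    G R = 0 ∧
    (∀ r ∈ Ioo 0 R, 0 < G r) :=
  stmt_9_general a κ b δ₁ R ha hb hδ hR G hG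
end

section
/- Let b > 0, R > 0, δ₁ > 0, C > 2δ₁, D := 2 − C/δ₁ (so D < 0), and let G(r) = (b/(2C)) · ( r² + (2/D − 1)·R² − (2/D)·R^{2−D}·r^D ) for r ∈ (0,R]. Then the function r ↦ 2r + G(r) is strictly convex on (0,R]; there exists a unique r₀ ∈ (0,R) with 2 + G'(r₀) = 0; this r₀ satisfies r₀ ≤ ( (b/(2C))·R^{2−D} )^{1/(1−D)} and 2r₀ + G(r₀) ≤ 2·(1 − 2/D)·r₀; consequently inf_{0 < r ≤ R} ( 2r + G(r) ) ≤ 2·(1 − 2/D)·( (b/(2C))·R^{2−D} )^{1/(1−D)}. -/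
/-!
Write `k = b / (2C)` and `M = R^(2-D)`. Then `G'(r) = 2k (r - M r^(D-1))` is strictly increasing
on `(0, ∞)` since `D - 1 < 0`; this gives strict convexity and uniqueness of the critical point.
Multiplying `2 + G'(r) = 0` by `r^(1-D)` turns it into `r^(1-D) (1 + k r) = k M`, whose left side
is continuous on `[0, R]`, vanishes at `0` and exceeds `k M` at `R`; this yields `r₀`, and also
`r₀^(1-D) ≤ k M`. At `r₀` the singular term `k M r₀^D` equals `r₀ (1 + k r₀)`, so
`2 r₀ + G(r₀) = (2 - 2/D) r₀ - k (1 - 2/D) (R² - r₀²) ≤ 2 (1 - 2/D) r₀`.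
-/

open Set

noncomputable def flatBarrier (k R D r : ℝ) : ℝ :=
  k * (r ^ 2 + (2 / D - 1) * R ^ 2 - 2 / D * R ^ (2 - D) * r ^ D)

section

variable {k R D r : ℝ}

theorem hasDerivAt_flatBarrier (hD : D ≠ 0) (hr : 0 < r) :
    HasDerivAt (flatBarrier k R D) (2 * k * (r - R ^ (2 - D) * r ^ (D - 1))) r := by
  have hrpow : HasDerivAt (fun r : ℝ => r ^ D) (D * r ^ (D - 1)) r :=
    Real.hasDerivAt_rpow_const (Or.inl hr.ne')
  refine HasDerivAt.congr_deriv (f := flatBarrier k R D) ((((hasDerivAt_pow 2 r).add_const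
    ((2 / D - 1) * R ^ 2)).sub (hrpow.const_mul (2 / D * R ^ (2 - D)))).const_mul k) ?_
  field_simp
  ring

theorem deriv_flatBarrier (hD : D ≠ 0) (hr : 0 < r) :
    deriv (flatBarrier k R D) r = 2 * k * (r - R ^ (2 - D) * r ^ (D - 1)) :=
  (hasDerivAt_flatBarrier hD hr).deriv

theorem strictMonoOn_deriv_flatBarrier (hk : 0 < k) (hR : 0 < R) (hD : D < 0) :
    StrictMonoOn (deriv (flatBarrier k R D)) (Ioi 0) := by
  intro x hx y hy hxy
  have hpow : y ^ (D - 1) < x ^ (D - 1) := Real.rpow_lt_rpow_of_neg hx hxy (by linarith)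
  have hM : 0 < R ^ (2 - D) := Real.rpow_pos_of_pos hR _
  rw [deriv_flatBarrier hD.ne hx, deriv_flatBarrier hD.ne hy]
  gcongr

theorem strictConvexOn_flatBarrier (hk : 0 < k) (hR : 0 < R) (hD : D < 0) :
    StrictConvexOn ℝ (Ioi 0) (flatBarrier k R D) := by
  refine StrictMonoOn.strictConvexOn_of_deriv (convex_Ioi 0) ?_ ?_
  · exact fun r hr => (hasDerivAt_flatBarrier hD.ne hr).continuousAt.continuousWithinAt
  · simpa only [interior_Ioi] using strictMonoOn_deriv_flatBarrier hk hR hD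

theorem two_add_deriv_flatBarrier_eq_zero_iff (hD : D ≠ 0) (hr : 0 < r) :
    2 + deriv (flatBarrier k R D) r = 0 ↔ r ^ (1 - D) * (1 + k * r) = k * R ^ (2 - D) := by
  have hinv : r ^ (1 - D) * r ^ (D - 1) = 1 := by
    rw [← Real.rpow_add hr]; norm_num
  have hpos : 0 < r ^ (1 - D) := Real.rpow_pos_of_pos hr _
  rw [deriv_flatBarrier hD hr]
  constructor
  · intro h
    have : 1 + k * r = k * R ^ (2 - D) * r ^ (D - 1) := by linarith
    rw [this, mul_comm, mul_assoc, mul_comm _ (r ^ (1 - D)), hinv, mul_one]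
  · intro h
    have : 1 + k * r = k * R ^ (2 - D) * r ^ (D - 1) := by
      rw [← h, mul_comm (r ^ (1 - D)), mul_assoc, hinv, mul_one]
    linarith

theorem exists_rpow_mul_one_add_eq (hk : 0 < k) (hR : 0 < R) (hD : D < 0) :
    ∃ r ∈ Ioo 0 R, r ^ (1 - D) * (1 + k * r) = k * R ^ (2 - D) := by
  have hcont : ContinuousOn (fun r : ℝ => r ^ (1 - D) * (1 + k * r)) (Icc 0 R) :=
    ((Real.continuous_rpow_const (by linarith)).mul (by fun_prop)).continuousOn
  have hRpow : R ^ (2 - D) = R ^ (1 - D) * R := by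
    rw [← Real.rpow_add_one hR.ne']; ring_nf
  have hmem : k * R ^ (2 - D) ∈ Ioo (0 ^ (1 - D) * (1 + k * 0)) (R ^ (1 - D) * (1 + k * R)) := by
    rw [Real.zero_rpow (by linarith), zero_mul, hRpow]
    exact ⟨by positivity, by nlinarith [Real.rpow_pos_of_pos hR (1 - D)]⟩
  exact intermediate_value_Ioo hR.le hcont hmem

theorem le_rpow_of_rpow_mul_one_add_eq (hk : 0 ≤ k) (hR : 0 ≤ R) (hD : D < 1) (hr : 0 ≤ r)
    (hcrit : r ^ (1 - D) * (1 + k * r) = k * R ^ (2 - D)) :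
    r ≤ (k * R ^ (2 - D)) ^ (1 / (1 - D)) := by
  rw [one_div, Real.le_rpow_inv_iff_of_pos hr (by positivity) (by linarith), ← hcrit]
  exact le_mul_of_one_le_right (by positivity) (by nlinarith)

theorem two_mul_add_flatBarrier_le (hk : 0 ≤ k) (hD : D < 0) (hr : 0 < r) (hrR : r ≤ R)
    (hcrit : r ^ (1 - D) * (1 + k * r) = k * R ^ (2 - D)) :
    2 * r + flatBarrier k R D r ≤ 2 * (1 - 2 / D) * r := by
  have hq : 2 / D < 0 := div_neg_of_pos_of_neg two_pos hD
  have hsing : k * R ^ (2 - D) * r ^ D = r * (1 + k * r) := by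
    have hsplit : r ^ (1 - D) * r ^ D = r := by rw [← Real.rpow_add hr]; norm_num
    rw [← hcrit]
    linear_combination (1 + k * r) * hsplit
  have hR2 : r ^ 2 ≤ R ^ 2 := pow_le_pow_left₀ hr.le hrR 2
  have hexp : flatBarrier k R D r
      = k * r ^ 2 + k * (2 / D - 1) * R ^ 2 - 2 / D * (r * (1 + k * r)) := by
    rw [flatBarrier, ← hsing]; ring
  rw [hexp]
  nlinarith [mul_nonneg hk (sub_nonneg.2 hR2), mul_nonneg (neg_nonneg.2 hq.le) hr.le]

theorem le_flatBarrier (hk : 0 ≤ k) (hR : 0 ≤ R) (hD : D < 0) (hr : 0 ≤ r) :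
    k * (2 / D - 1) * R ^ 2 ≤ flatBarrier k R D r := by
  have hq : 2 / D < 0 := div_neg_of_pos_of_neg two_pos hD
  have hsing : 0 ≤ R ^ (2 - D) * r ^ D := by positivity
  rw [flatBarrier]
  nlinarith [mul_nonneg hk (sq_nonneg r), mul_nonneg hk (mul_nonneg (neg_nonneg.2 hq.le) hsing)]

end

/-- Minimization of 2r + G(r) for the flat-case barrier G, used in the excess estimate. -/
theorem stmt_10 (b R δ₁ C D : ℝ) (hb : 0 < b) (hR : 0 < R) (hδ : 0 < δ₁)
    (hC : 2 * δ₁ < C) (hD : D = 2 - C / δ₁)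
    (G : ℝ → ℝ)
    (hG : ∀ r : ℝ, G r = b / (2 * C) * (r ^ 2 + (2 / D - 1) * R ^ 2 - (2 / D) * R ^ (2 - D) * r ^ D)) :
    StrictConvexOn ℝ (Ioc 0 R) (fun r => 2 * r + G r) ∧
    ∃ r₀ ∈ Ioo 0 R,
      (2 + deriv G r₀ = 0) ∧
      (∀ r ∈ Ioo 0 R, 2 + deriv G r = 0 → r = r₀) ∧
      r₀ ≤ (b / (2 * C) * R ^ (2 - D)) ^ (1 / (1 - D)) ∧
      2 * r₀ + G r₀ ≤ 2 * (1 - 2 / D) * r₀ ∧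
      sInf ((fun r => 2 * r + G r) '' Ioc 0 R) ≤
        2 * (1 - 2 / D) * (b / (2 * C) * R ^ (2 - D)) ^ (1 / (1 - D)) := by
  have hDneg : D < 0 := by
    rw [hD, sub_neg, lt_div_iff₀ hδ]
    linarith
  have hk : 0 < b / (2 * C) := by
    have : 0 < C := by linarith
    positivity
  obtain rfl : G = flatBarrier (b / (2 * C)) R D := funext hG
  obtain ⟨r₀, hr₀, hcrit⟩ := exists_rpow_mul_one_add_eq hk hR hDneg
  have hroot := (two_add_deriv_flatBarrier_eq_zero_iff hDneg.ne hr₀.1).2 hcrit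
  have hr₀le := le_rpow_of_rpow_mul_one_add_eq hk.le hR.le (by linarith) hr₀.1.le hcrit
  have hval := two_mul_add_flatBarrier_le hk.le hDneg hr₀.1 hr₀.2.le hcrit
  have hconvex := ((convexOn_id (convex_Ioi (0 : ℝ))).smul zero_le_two).add_strictConvexOn
    (strictConvexOn_flatBarrier hk hR hDneg)
  have hbdd : BddBelow ((fun r => 2 * r + flatBarrier (b / (2 * C)) R D r) '' Ioc 0 R) := by
    refine ⟨b / (2 * C) * (2 / D - 1) * R ^ 2, ?_⟩
    rintro _ ⟨r, hr, rfl⟩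
    linarith [le_flatBarrier hk.le hR.le hDneg hr.1.le, hr.1]
  refine ⟨hconvex.subset Ioc_subset_Ioi_self (convex_Ioc 0 R), r₀, hr₀, hroot,
    fun r hr hr' => (strictMonoOn_deriv_flatBarrier hk hR hDneg).injOn hr.1 hr₀.1 (by linarith),
    hr₀le, hval, ?_⟩
  calc sInf _ ≤ 2 * r₀ + flatBarrier (b / (2 * C)) R D r₀ :=
        csInf_le hbdd ⟨r₀, Ioo_subset_Ioc_self hr₀, rfl⟩
    _ ≤ 2 * (1 - 2 / D) * r₀ := hval
    _ ≤ _ := by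
        gcongr
        linarith [div_neg_of_pos_of_neg two_pos hDneg]
end

section
/- Let m > 1 be a real number and let α, β, r > 0. Then ∫₀^{α·r} (sinh(β·t))^{m−1} dt ≤ (2m/(m−1)) · (β·r)^{−m} · exp(α·(m−1)·β·r) · ∫₀^{r} (sinh(β·t))^{m−1} dt. -/
/-!
Since `x ≤ sinh x ≤ exp x` for `x ≥ 0`, the integral over `[0, α r]` is at most
`exp ((m - 1) α β r) / ((m - 1) β)` and the integral over `[0, r]` is at least
`β ^ (m - 1) r ^ m / m`. These two bounds give the inequality with a factor `2` to spare.
-/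

open Real Set intervalIntegral

lemma Real.sinh_le_exp (x : ℝ) : sinh x ≤ exp x := by
  rw [← cosh_add_sinh]
  linarith [cosh_pos x]

lemma integral_exp_const_mul {c : ℝ} (hc : c ≠ 0) (s : ℝ) :
    ∫ t in (0 : ℝ)..s, exp (c * t) = (exp (c * s) - 1) / c := by
  rw [integral_comp_mul_left _ hc, integral_exp, mul_zero, exp_zero, smul_eq_mul, inv_mul_eq_div]

lemma integral_sinh_mul_rpow_le {β p s : ℝ} (hβ : 0 < β) (hp : 0 < p) (hs : 0 ≤ s) :
    ∫ t in (0 : ℝ)..s, sinh (β * t) ^ p ≤ (exp (p * β * s) - 1) / (p * β) := by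
  rw [← integral_exp_const_mul (mul_pos hp hβ).ne']
  refine integral_mono_on hs ?_ ?_ fun t ht => ?_
  · exact ((by fun_prop : Continuous fun t => sinh (β * t)).rpow_const
      fun _ => Or.inr hp.le).intervalIntegrable _ _
  · exact (by fun_prop : Continuous fun t => exp (p * β * t)).intervalIntegrable _ _
  · have hsinh : 0 ≤ sinh (β * t) := sinh_nonneg_iff.mpr (mul_nonneg hβ.le ht.1)
    calc sinh (β * t) ^ p ≤ exp (β * t) ^ p := rpow_le_rpow hsinh (sinh_le_exp _) hp.le
      _ = exp (p * β * t) := by rw [← exp_mul]; ring_nf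

lemma rpow_mul_div_le_integral_sinh_mul_rpow {β p r : ℝ} (hβ : 0 ≤ β) (hp : 0 ≤ p) (hr : 0 ≤ r) :
    β ^ p * r ^ (p + 1) / (p + 1) ≤ ∫ t in (0 : ℝ)..r, sinh (β * t) ^ p := by
  have hpow : ∫ t in (0 : ℝ)..r, (β * t) ^ p = β ^ p * r ^ (p + 1) / (p + 1) := by
    have hsplit : EqOn (fun t => (β * t) ^ p) (fun t => β ^ p * t ^ p) (uIcc 0 r) :=
      fun t ht => mul_rpow hβ (uIcc_of_le hr ▸ ht).1
    rw [integral_congr hsplit, integral_const_mul, integral_rpow (Or.inl (by linarith)),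
      zero_rpow (by linarith : p + 1 ≠ 0)]
    ring
  rw [← hpow]
  refine integral_mono_on hr ?_ ?_ fun t ht => ?_
  · exact ((by fun_prop : Continuous fun t => β * t).rpow_const
      fun _ => Or.inr hp).intervalIntegrable _ _
  · exact ((by fun_prop : Continuous fun t => sinh (β * t)).rpow_const
      fun _ => Or.inr hp).intervalIntegrable _ _
  · have hβt : 0 ≤ β * t := mul_nonneg hβ ht.1
    exact rpow_le_rpow hβt (self_le_sinh_iff.mpr hβt) hp

/-- Ratio estimate for volumes of balls in hyperbolic model spaces, used to bound the
number of ends. -/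
theorem stmt_11 (m α β r : ℝ) (hm : 1 < m) (hα : 0 < α) (hβ : 0 < β) (hr : 0 < r) :
    (∫ t in (0:ℝ)..(α * r), Real.sinh (β * t) ^ (m - 1)) ≤
      (2 * m / (m - 1)) * (β * r) ^ (-m) * Real.exp (α * (m - 1) * β * r) *
        ∫ t in (0:ℝ)..r, Real.sinh (β * t) ^ (m - 1) := by
  have hp : 0 < m - 1 := by linarith
  set E := exp (α * (m - 1) * β * r)
  have hupper := integral_sinh_mul_rpow_le hβ hp (mul_pos hα hr).le
  rw [show (m - 1) * β * (α * r) = α * (m - 1) * β * r by ring] at hupper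
  have hlower := rpow_mul_div_le_integral_sinh_mul_rpow hβ.le hp.le hr.le
  rw [sub_add_cancel] at hlower
  have hconst : 2 * m / (m - 1) * (β * r) ^ (-m) * E * (β ^ (m - 1) * r ^ m / m)
      = 2 * E / ((m - 1) * β) := by
    rw [rpow_neg (by positivity), mul_rpow hβ.le hr.le, rpow_sub hβ, rpow_one]
    have : 0 < β ^ m := rpow_pos_of_pos hβ m
    have : 0 < r ^ m := rpow_pos_of_pos hr m
    field_simp
  calc (∫ t in (0:ℝ)..(α * r), sinh (β * t) ^ (m - 1))
      ≤ (E - 1) / ((m - 1) * β) := hupper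
    _ ≤ 2 * E / ((m - 1) * β) := by
        gcongr
        linarith [exp_pos (α * (m - 1) * β * r)]
    _ = 2 * m / (m - 1) * (β * r) ^ (-m) * E * (β ^ (m - 1) * r ^ m / m) := hconst.symm
    _ ≤ _ := by gcongr
end
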